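/- Let n ≥ 2 and F_1,…,F_n be finite fields with |F_1| ≤ ⋯ ≤ |F_n| and char(F_1) = 2. Then the chromatic number and clique number of the induced subgraph of the total graph of F_1 × ⋯ × F_n on the set of units (tuples with all coordinates nonzero) are both equal to (|F_2|−1)(|F_3|−1)⋯(|F_n|−1). -/

import Mathlib

/-- The induced subgraph of the total graph of a product of fields on the units
(tuples with all coordinates nonzero): distinct `x, y` adjacent iff `x i + y i = 0`
for some coordinate `i`. -/
def regGraphProd {n : ℕ} (F : Fin n → Type*) [∀ i, Field (F i)] :
    SimpleGraph {x : ∀ i, F i // ∀ i, x i ≠ 0} :=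
  SimpleGraph.fromRel (fun x y => ∃ i, (x : ∀ i, F i) i + (y : ∀ i, F i) i = 0)

lemma card_nonzero_aux {K : Type*} [Fintype K] [DecidableEq K] (a : K) :
    Fintype.card {v : K // v ≠ a} = Fintype.card K - 1 := by
  have := Fintype.card_subtype_compl (fun v : K => v = a)
  simp only [Fintype.card_subtype_eq] at this
  exact this

theorem stmt18 (n : ℕ) (hn : 2 ≤ n) (F : Fin n → Type*)
    [∀ i, Field (F i)] [∀ i, Fintype (F i)]
    (hmono : ∀ i j : Fin n, i ≤ j → Fintype.card (F i) ≤ Fintype.card (F j))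
    (hchar : CharP (F ⟨0, by omega⟩) 2) :
    (regGraphProd F).chromaticNumber =
        ((∏ i ∈ Finset.univ.erase (⟨0, by omega⟩ : Fin n),
          (Fintype.card (F i) - 1) : ℕ) : ℕ∞) ∧
    (regGraphProd F).cliqueNum =
        ∏ i ∈ Finset.univ.erase (⟨0, by omega⟩ : Fin n), (Fintype.card (F i) - 1) := by
  classical
  set z : Fin n := ⟨0, by omega⟩ with hzdef
  set N : ℕ := ∏ i ∈ Finset.univ.erase z, (Fintype.card (F i) - 1) with hNdef
  haveI : CharP (F z) 2 := hchar
  set V := {x : ∀ i, F i // ∀ i, x i ≠ 0} with hVdef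
  haveI : Fintype V := Fintype.ofFinite _
  -- embeddings of nonzero elements
  have hemb : ∀ i : Fin n, Nonempty ({v : F z // v ≠ 0} ↪ {v : F i // v ≠ 0}) := by
    intro i
    apply Function.Embedding.nonempty_of_card_le
    rw [card_nonzero_aux, card_nonzero_aux]
    exact Nat.sub_le_sub_right (hmono z i (Fin.mk_le_of_le_val (Nat.zero_le _))) 1
  let ι : ∀ i : Fin n, {v : F z // v ≠ 0} ↪ {v : F i // v ≠ 0} := fun i => (hemb i).some
  -- the color type
  let β := ∀ i : {i : Fin n // i ≠ z}, {v : F i.1 // v ≠ 0}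
  let Θ : ∀ i : {i : Fin n // i ≠ z},
      {v : F z // v ≠ 0} → {v : F i.1 // v ≠ 0} → {v : F i.1 // v ≠ 0} :=
    fun i t v =>
      if ringChar (F i.1) = 2 then ⟨(ι i.1 t).1 * v.1, mul_ne_zero (ι i.1 t).2 v.2⟩ else v
  have Θcancel : ∀ i t v w, Θ i t v = Θ i t w → v = w := by
    intro i t v w h
    by_cases hc : ringChar (F i.1) = 2
    · simp only [Θ, if_pos hc] at h
      have := congrArg Subtype.val h
      exact Subtype.ext (mul_left_cancel₀ (ι i.1 t).2 this)
    · simpa only [Θ, if_neg hc] using h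
  have Θkey : ∀ i t s v w, Θ i t v = Θ i s w → (v.1 + w.1 = 0) → t = s := by
    intro i t s v w h hvw
    by_cases hc : ringChar (F i.1) = 2
    · haveI : CharP (F i.1) 2 := hc ▸ ringChar.charP (F i.1)
      have hvw' : v = w := by
        apply Subtype.ext
        rw [eq_neg_of_add_eq_zero_left hvw, CharTwo.neg_eq]
      subst hvw'
      simp only [Θ, if_pos hc] at h
      have := congrArg Subtype.val h
      have := mul_right_cancel₀ v.2 this
      exact (ι i.1).injective (Subtype.ext this)
    · exfalso
      simp only [Θ, if_neg hc] at h
      subst h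
      have h2 : (2 : F i.1) * v.1 = 0 := by rw [two_mul]; exact hvw
      rcases mul_eq_zero.mp h2 with h2 | h2
      · have : (2 : ℕ) ≠ 0 := two_ne_zero
        have hdvd : ringChar (F i.1) ∣ 2 := by
          rwa [← Nat.cast_ofNat, ringChar.spec] at h2
        rcases (Nat.dvd_prime Nat.prime_two).mp hdvd with h1 | h1
        · exact CharP.ringChar_ne_one h1
        · exact hc h1
      · exact v.2 h2
  -- the coloring
  let C : V → β := fun x i => Θ i ⟨x.1 z, x.2 z⟩ ⟨x.1 i.1, x.2 i.1⟩
  have hproper : ∀ x y : V, (regGraphProd F).Adj x y → C x ≠ C y := by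
    intro x y hadj hC
    rw [regGraphProd, SimpleGraph.fromRel_adj] at hadj
    obtain ⟨hne, h⟩ := hadj
    have h' : ∃ i, x.1 i + y.1 i = 0 := by
      rcases h with ⟨i, hi⟩ | ⟨i, hi⟩
      · exact ⟨i, hi⟩
      · exact ⟨i, by rw [add_comm]; exact hi⟩
    obtain ⟨i, hi⟩ := h'
    have hz0 : x.1 z = y.1 z := by
      by_cases hiz : i = z
      · subst hiz
        rw [eq_neg_of_add_eq_zero_left hi, CharTwo.neg_eq]
      · have hCi := congrFun hC ⟨i, hiz⟩
        have := Θkey ⟨i, hiz⟩ _ _ _ _ hCi hi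
        exact congrArg Subtype.val this
    apply hne
    apply Subtype.ext
    funext j
    by_cases hjz : j = z
    · subst hjz; exact hz0
    · have hCj : Θ ⟨j, hjz⟩ ⟨x.1 z, x.2 z⟩ ⟨x.1 j, x.2 j⟩
          = Θ ⟨j, hjz⟩ ⟨y.1 z, y.2 z⟩ ⟨y.1 j, y.2 j⟩ := congrFun hC ⟨j, hjz⟩
      have ht : (⟨x.1 z, x.2 z⟩ : {v : F z // v ≠ 0}) = ⟨y.1 z, y.2 z⟩ := Subtype.ext hz0
      rw [ht] at hCj
      have := Θcancel ⟨j, hjz⟩ _ _ _ hCj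
      exact congrArg Subtype.val this
  let coloring : (regGraphProd F).Coloring β := SimpleGraph.Coloring.mk C (fun hadj => hproper _ _ hadj)
  have hcardβ : Fintype.card β = N := by
    rw [Fintype.card_pi, hNdef]
    rw [Finset.prod_subtype (Finset.univ.erase z) (p := fun i => i ≠ z)
      (by intro x; simp) (fun i => Fintype.card (F i) - 1)]
    exact Finset.prod_congr rfl (fun i _ => card_nonzero_aux (0 : F i.1))
  have hcol : (regGraphProd F).Colorable N := hcardβ ▸ coloring.colorable
  -- the clique
  let f : β → V := fun a =>
    ⟨fun j => if h : j = z then 1 else (a ⟨j, h⟩).1, by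
      intro j
      by_cases h : j = z
      · simp [h]
      · simp [h, (a ⟨j, h⟩).2]⟩
  have hfinj : Function.Injective f := by
    intro a b hab
    funext i
    have := congrFun (congrArg Subtype.val hab) i.1
    simp only [f, dif_neg i.2] at this
    exact Subtype.ext this
  let S : Finset V := Finset.univ.map ⟨f, hfinj⟩
  have hSz : ∀ x ∈ S, x.1 z = 1 := by
    intro x hx
    obtain ⟨a, _, rfl⟩ := Finset.mem_map.mp hx
    simp [f]
  have hSclique : (regGraphProd F).IsNClique N S := by
    constructor
    · intro x hx y hy hxy
      rw [regGraphProd, SimpleGraph.fromRel_adj]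
      refine ⟨hxy, Or.inl ⟨z, ?_⟩⟩
      rw [hSz x hx, hSz y hy]
      exact CharTwo.add_self_eq_zero 1
    · rw [Finset.card_map, Finset.card_univ, hcardβ]
  constructor
  · apply le_antisymm
    · exact hcol.chromaticNumber_le
    · have := hSclique.isClique.card_le_chromaticNumber
      rwa [hSclique.card_eq] at this
  · apply le_antisymm
    · obtain ⟨s, hs⟩ := (regGraphProd F).exists_isNClique_cliqueNum
      have := hs.isClique.card_le_of_colorable hcol
      rwa [hs.card_eq] at this
    · have := SimpleGraph.IsClique.card_le_cliqueNum (tc := hSclique.isClique)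
      rwa [hSclique.card_eq] at this
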